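/- arXiv:2104.06067 — 5 statements merged into one kernel-verified Lean document; each statement's English description precedes it below -/
import Mathlib

section
/- For every integer n ≥ 1, the sum over all partitions λ of n of 1/z_λ(t) equals 1 - t, where z_λ(t) = ∏_{i≥1} i^{m_i(λ)} m_i(λ)! / ∏_j (1 - t^{λ_j}). -/
/-!
For arbitrary weights `w`, put `h_n = ∑_{λ ⊢ n} w_λ / z_λ` with `w_λ = ∏_j w_{λ_j}`. Removing one
part `k` from `λ` and counting the `k · m_k(λ)` ways this accounts for in `z_λ` gives Newton's
recurrence `n h_n = ∑_{k=1}^n w_k h_{n-k}`, i.e. `∑ h_n xⁿ = exp (∑ w_k xᵏ / k)`. For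
`w_k = 1 - tᵏ` this series is `(1 - t x) / (1 - x)`; concretely, `h_0 = 1` and `h_n = 1 - t` for
`n ≥ 1` solve the recurrence, by a telescoping geometric sum.
-/

open Finset

/-- `z_λ` (the classical value, without `t`): `∏ i^{m_i(λ)} m_i(λ)!`. -/
def zNat (s : Multiset ℕ) : ℕ :=
  s.prod * ∏ i ∈ s.toFinset, (s.count i).factorial

theorem Multiset.prod_factorial_count_eq_of_toFinset_subset {α : Type*} [DecidableEq α]
    {s : Multiset α} {S : Finset α} (h : s.toFinset ⊆ S) :
    ∏ i ∈ s.toFinset, (s.count i).factorial = ∏ i ∈ S, (s.count i).factorial :=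
  prod_subset h fun i _ hi => by
    rw [Multiset.count_eq_zero_of_notMem (by simpa using hi), Nat.factorial_zero]

theorem zNat_cons (k : ℕ) (s : Multiset ℕ) :
    zNat (k ::ₘ s) = k * (s.count k + 1) * zNat s := by
  have hsub : s.toFinset ⊆ insert k s.toFinset := subset_insert k _
  have hsub' : (k ::ₘ s).toFinset ⊆ insert k s.toFinset := by simp
  have hcount : ∏ i ∈ (insert k s.toFinset).erase k, ((k ::ₘ s).count i).factorial
      = ∏ i ∈ (insert k s.toFinset).erase k, (s.count i).factorial :=
    prod_congr rfl fun i hi => by rw [Multiset.count_cons_of_ne (ne_of_mem_erase hi)]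
  unfold zNat
  rw [Multiset.prod_factorial_count_eq_of_toFinset_subset hsub,
    Multiset.prod_factorial_count_eq_of_toFinset_subset hsub',
    ← mul_prod_erase _ _ (mem_insert_self k s.toFinset), hcount, Multiset.count_cons_self,
    Nat.factorial_succ, Multiset.prod_cons, ← mul_prod_erase _ _ (mem_insert_self k s.toFinset)]
  ring

namespace Nat.Partition

theorem sum_count_mul_eq (n : ℕ) (p : n.Partition) :
    ∑ k ∈ p.parts.toFinset, p.parts.count k * k = n := by
  simpa only [smul_eq_mul, p.parts_sum] using (Finset.sum_multiset_count p.parts).symm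

def erasePartEquiv {n k : ℕ} (hk : k ≠ 0) (hkn : k ≤ n) :
    {p : n.Partition // k ∈ p.parts} ≃ (n - k).Partition where
  toFun p :=
    { parts := p.1.parts.erase k
      parts_pos := fun hi => p.1.parts_pos (Multiset.mem_of_mem_erase hi)
      parts_sum := by
        have h := p.1.parts_sum
        rw [← Multiset.cons_erase p.2, Multiset.sum_cons] at h
        omega }
  invFun q :=
    ⟨{ parts := k ::ₘ q.parts
       parts_pos := fun hi => (Multiset.mem_cons.mp hi).elim (fun h => h ▸ Nat.pos_of_ne_zero hk)
         q.parts_pos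
       parts_sum := by rw [Multiset.sum_cons, q.parts_sum]; omega },
      Multiset.mem_cons_self k _⟩
  left_inv p := Subtype.ext (Nat.Partition.ext (Multiset.cons_erase p.2))
  right_inv q := Nat.Partition.ext (Multiset.erase_cons_head k q.parts)

end Nat.Partition

theorem sum_Icc_one_sub_pow_mul_add {R : Type*} [CommRing R] (t : R) (m : ℕ) :
    ∑ k ∈ Icc 1 m, (1 - t ^ k) * (1 - t) + (1 - t ^ (m + 1)) = (m + 1) * (1 - t) := by
  induction m with
  | zero => simp
  | succ m ih =>
    rw [sum_Icc_succ_top (by omega), Nat.cast_succ, add_mul, ← ih]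
    ring

section PartitionSum

variable {K : Type*} [Field K]

-- `zWeight (fun j => 1 - t ^ j) λ` is `1 / z_λ(t)`.
noncomputable def zWeight (w : ℕ → K) (s : Multiset ℕ) : K :=
  (s.map w).prod / (zNat s : K)

noncomputable def partitionSum (w : ℕ → K) (n : ℕ) : K :=
  ∑ lam : n.Partition, zWeight w lam.parts

theorem partitionSum_zero (w : ℕ → K) : partitionSum w 0 = 1 := by
  rw [partitionSum, Fintype.sum_unique]
  simp [zWeight, zNat]

variable [CharZero K]

theorem mul_zWeight_cons (w : ℕ → K) {k : ℕ} (hk : k ≠ 0) (s : Multiset ℕ) :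
    ((k * (s.count k + 1) : ℕ) : K) * zWeight w (k ::ₘ s) = w k * zWeight w s := by
  have hne : ((k * (s.count k + 1) : ℕ) : K) ≠ 0 := Nat.cast_ne_zero.mpr (by positivity)
  rw [zWeight, zWeight, zNat_cons, Multiset.map_cons, Multiset.prod_cons, Nat.cast_mul _ (zNat s),
    mul_div_assoc', mul_div_mul_left _ _ hne, mul_div_assoc]

theorem natCast_mul_zWeight (w : ℕ → K) {n : ℕ} (p : n.Partition) :
    (n : K) * zWeight w p.parts = ∑ k ∈ p.parts.toFinset, w k * zWeight w (p.parts.erase k) := by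
  have hn : (n : K) = ∑ k ∈ p.parts.toFinset, ((p.parts.count k * k : ℕ) : K) := by
    rw [← Nat.cast_sum, p.sum_count_mul_eq n]
  rw [hn, sum_mul]
  refine sum_congr rfl fun k hk => ?_
  have hk : k ∈ p.parts := Multiset.mem_toFinset.mp hk
  have hcount : p.parts.count k = (p.parts.erase k).count k + 1 := by
    rw [Multiset.count_erase_self, Nat.sub_add_cancel (Multiset.count_pos.mpr hk)]
  have hcons := mul_zWeight_cons w (p.parts_pos hk).ne' (p.parts.erase k)
  rwa [Multiset.cons_erase hk, ← hcount, mul_comm k] at hcons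

theorem natCast_mul_partitionSum (w : ℕ → K) (n : ℕ) :
    (n : K) * partitionSum w n = ∑ k ∈ Icc 1 n, w k * partitionSum w (n - k) := by
  have hmem : ∀ (p : n.Partition) (k : ℕ), p ∈ univ ∧ k ∈ p.parts.toFinset ↔
      p ∈ (univ.filter fun q : n.Partition => k ∈ q.parts) ∧ k ∈ Icc 1 n := fun p k => by
    simp only [mem_univ, true_and, Multiset.mem_toFinset, mem_filter, mem_Icc, iff_self_and]
    exact fun hk => ⟨p.parts_pos hk, Nat.Partition.le_of_mem_parts hk⟩
  calc (n : K) * partitionSum w n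
      = ∑ p : n.Partition, ∑ k ∈ p.parts.toFinset, w k * zWeight w (p.parts.erase k) := by
        rw [partitionSum, mul_sum]
        exact sum_congr rfl fun p _ => natCast_mul_zWeight w p
    _ = ∑ k ∈ Icc 1 n, ∑ p ∈ univ.filter (fun q : n.Partition => k ∈ q.parts),
          w k * zWeight w (p.parts.erase k) :=
        sum_comm' hmem
    _ = ∑ k ∈ Icc 1 n, w k * partitionSum w (n - k) := by
        refine sum_congr rfl fun k hk => ?_
        obtain ⟨hk1, hkn⟩ := mem_Icc.mp hk
        rw [← mul_sum, sum_subtype (p := fun q : n.Partition => k ∈ q.parts) _ (fun p => by simp),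
          partitionSum]
        exact congrArg _ (Fintype.sum_equiv (Nat.Partition.erasePartEquiv (by omega) hkn) _ _
          fun _ => rfl)

theorem partitionSum_one_sub_pow (t : K) {n : ℕ} (hn : 1 ≤ n) :
    partitionSum (fun j => 1 - t ^ j) n = 1 - t := by
  induction n using Nat.strong_induction_on with
  | _ n ih =>
    obtain ⟨m, rfl⟩ : ∃ m, n = m + 1 := ⟨n - 1, by omega⟩
    have hrec := natCast_mul_partitionSum (fun j => 1 - t ^ j) (m + 1)
    rw [sum_Icc_succ_top (by omega), Nat.sub_self, partitionSum_zero, mul_one,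
      sum_congr rfl fun k hk => by rw [ih (m + 1 - k) (by grind) (by grind)],
      sum_Icc_one_sub_pow_mul_add, ← Nat.cast_succ] at hrec
    exact mul_left_cancel₀ (Nat.cast_ne_zero.mpr m.succ_ne_zero) hrec

end PartitionSum

/-- for `n ≥ 1`, `∑_{λ ⊢ n} 1 / z_λ(t) = 1 - t` in `ℚ(t)`, where
`1/z_λ(t) = (∏_j (1 - t^{λ_j})) / (∏_i i^{m_i} m_i!)`. -/
theorem sum_inv_zlam_t (n : ℕ) (hn : 1 ≤ n) :
    ∑ lam : n.Partition,
        (lam.parts.map (fun j => 1 - (RatFunc.X : RatFunc ℚ) ^ j)).prod /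
          (zNat lam.parts : RatFunc ℚ)
      = 1 - (RatFunc.X : RatFunc ℚ) :=
  partitionSum_one_sub_pow RatFunc.X hn
end

section
/- Let μ = (μ_1,...,μ_r) be a partition of n and for 0 ≤ i ≤ n define b_i(μ;t) as the coefficient of v^i in ∏_{j=1}^r (t^{-1} + v^{μ_j} + (1 - t^{-1})(1 + v + ... + v^{μ_j - 1})). Then b_i(μ;t) = (1-t^{-1})^{-r} · Σ_τ (1-t^{-1})^{l(μ-τ)+l(τ)}, where τ ranges over compositions with 0 ≤ τ_j ≤ μ_j and Σ_j τ_j = i. -/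
/-!
With `a = 1 - t⁻¹`, and since `μ_j > 0`, the `j`-th factor multiplied by `a` is
`∑_{k ≤ μ_j} a^{[k < μ_j] + [k ≠ 0]} v^k`. Expanding the product of these sums over the
compositions `τ ⊆ μ`, the coefficient of `v^i` in `a^r` times the original product is
`∑_{|τ| = i} a^{l(μ-τ) + l(τ)}`, and `a ≠ 0` because `t ≠ 1`.
-/

open Finset Polynomial

noncomputable section

def tq : RatFunc ℚ := RatFunc.X

theorem RatFunc.one_sub_inv_X_ne_zero {K : Type*} [Field K] :
    (1 - RatFunc.X⁻¹ : RatFunc K) ≠ 0 := by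
  rw [sub_ne_zero, ne_comm, inv_ne_one]
  intro h
  simpa using congrArg RatFunc.intDegree h

theorem Polynomial.coeff_prod_sum_C_mul_X_pow {ι R : Type*} [Fintype ι] [DecidableEq ι]
    [CommSemiring R] (s : ι → Finset ℕ) (f : ι → ℕ → R) (i : ℕ) :
    (∏ j, ∑ k ∈ s j, C (f j k) * X ^ k).coeff i =
      ∑ τ ∈ (Fintype.piFinset s).filter (fun τ => ∑ j, τ j = i), ∏ j, f j (τ j) := by
  simp only [prod_univ_sum, prod_mul_distrib, ← map_prod, prod_pow_eq_pow_sum, finsetSum_coeff,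
    coeff_C_mul_X_pow, sum_filter, eq_comm]

theorem Polynomial.C_one_sub_mul_C_add_X_pow_add_geom_eq_sum {R : Type*} [CommRing R] (b : R)
    {m : ℕ} (hm : 0 < m) :
    C (1 - b) * (C b + X ^ m + C (1 - b) * ∑ k ∈ range m, X ^ k) =
      ∑ k ∈ range (m + 1),
        C ((if k < m then 1 - b else 1) * (if k ≠ 0 then 1 - b else 1)) * X ^ k := by
  obtain ⟨m, rfl⟩ : ∃ m', m = m' + 1 := ⟨m - 1, by omega⟩
  have interior : ∀ k ∈ range m,
      C ((if k + 1 < m + 1 then 1 - b else 1) * (if k + 1 ≠ 0 then 1 - b else 1)) * X ^ (k + 1) =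
        C (1 - b) ^ 2 * X ^ (k + 1) := fun k hk => by
    rw [if_pos (by simpa using hk), if_pos k.succ_ne_zero, map_mul, sq]
  rw [sum_range_succ' (fun k => X ^ k), sum_range_succ _ (m + 1), sum_range_succ' _ m,
    sum_congr rfl interior, ← mul_sum]
  simp only [lt_irrefl, Nat.zero_lt_succ, Nat.add_one_ne_zero, ne_eq, not_true, not_false_eq_true,
    if_true, if_false, mul_one, one_mul, pow_zero, map_sub, map_one]
  ring

theorem bCoeff_eq_sum_general (r : ℕ) (μ : Fin r → ℕ) (hpos : ∀ j, 0 < μ j) (i : ℕ) :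
    Polynomial.coeff
        (∏ j, (Polynomial.C tq⁻¹ + (Polynomial.X : Polynomial (RatFunc ℚ)) ^ (μ j) +
          Polynomial.C (1 - tq⁻¹) * ∑ k ∈ Finset.range (μ j), Polynomial.X ^ k)) i
      = ((1 - tq⁻¹)⁻¹) ^ r *
          ∑ τ ∈ (Fintype.piFinset fun j => Finset.range (μ j + 1)).filter
              (fun τ => ∑ j, τ j = i),
            (1 - tq⁻¹) ^
              ((Finset.univ.filter fun j => τ j < μ j).card +
                (Finset.univ.filter fun j => τ j ≠ 0).card) := by
  set a : RatFunc ℚ := 1 - tq⁻¹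
  rw [inv_pow, eq_inv_mul_iff_mul_eq₀ (pow_ne_zero r RatFunc.one_sub_inv_X_ne_zero)]
  calc a ^ r * Polynomial.coeff (∏ j, (C tq⁻¹ + X ^ μ j + C a * ∑ k ∈ range (μ j), X ^ k)) i
      = Polynomial.coeff (∏ j, C a * (C tq⁻¹ + X ^ μ j + C a * ∑ k ∈ range (μ j), X ^ k)) i := by
        rw [prod_mul_distrib, prod_const, card_univ, Fintype.card_fin, ← C_pow, coeff_C_mul]
    _ = Polynomial.coeff (∏ j, ∑ k ∈ range (μ j + 1),
          C ((if k < μ j then a else 1) * (if k ≠ 0 then a else 1)) * X ^ k) i := by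
        rw [prod_congr rfl fun j _ => C_one_sub_mul_C_add_X_pow_add_geom_eq_sum tq⁻¹ (hpos j)]
    _ = _ := by
        rw [coeff_prod_sum_C_mul_X_pow]
        refine sum_congr rfl fun τ _ => ?_
        rw [prod_mul_distrib, ← prod_filter, ← prod_filter, prod_const, prod_const, pow_add]

/-- for a partition `μ = (μ_1,…,μ_r)` of `n`, the coefficient of `v^i` in
`∏_j (t⁻¹ + v^{μ_j} + (1 - t⁻¹)[μ_j]_v)` equals
`(1-t⁻¹)^{-r} ∑_{τ ⊆ μ, |τ| = i} (1-t⁻¹)^{l(μ-τ)+l(τ)}`. -/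
theorem bCoeff_eq_sum (n r : ℕ) (μ : Fin r → ℕ) (hpos : ∀ j, 0 < μ j)
    (hanti : Antitone μ) (hsum : ∑ j, μ j = n) (i : ℕ) (hi : i ≤ n) :
    Polynomial.coeff
        (∏ j, (Polynomial.C tq⁻¹ + (Polynomial.X : Polynomial (RatFunc ℚ)) ^ (μ j) +
          Polynomial.C (1 - tq⁻¹) * ∑ k ∈ Finset.range (μ j), Polynomial.X ^ k)) i
      = ((1 - tq⁻¹)⁻¹) ^ r *
          ∑ τ ∈ (Fintype.piFinset fun j => Finset.range (μ j + 1)).filter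
              (fun τ => ∑ j, τ j = i),
            (1 - tq⁻¹) ^
              ((Finset.univ.filter fun j => τ j < μ j).card +
                (Finset.univ.filter fun j => τ j ≠ 0).card) :=
  bCoeff_eq_sum_general r μ hpos i

end
end

section
/- Let M be the l×l matrix over ℚ(t) that is block upper triangular with an (r-1)×(r-1) upper triangular block M_0 with diagonal entries 1/(1-t), and an (l-r+1)×(l-r+1) block M_1 with (M_1)_{ii} = 1, (M_1)_{i+1,i} = 1/(1-t), (M_1)_{ij} = 1 for j > i, (M_1)_{ij} = 0 for j < i-1. Then det M = (1-t)^{-(r-1)} · (-t/(1-t))^{l-r}. -/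
open Finset

noncomputable section

/-- let `M` be an `l×l` matrix over `ℚ(t)` which is block upper
triangular with an `(r-1)×(r-1)` upper triangular block `M₀` having diagonal
entries `1/(1-t)`, zeros below the diagonal in the first `r-1` columns, and whose
lower-right `(l-r+1)×(l-r+1)` block `M₁` satisfies `(M₁)_{ii} = 1`,
`(M₁)_{i+1,i} = 1/(1-t)`, `(M₁)_{ij} = 1` for `j > i` and `(M₁)_{ij} = 0` for
`j < i-1` (the upper-right block is arbitrary). Then
`det M = (1-t)^{-(r-1)} (-t/(1-t))^{l-r}`. -/
theorem det_block_matrix (l r : ℕ) (hr : 1 ≤ r) (hrl : r ≤ l)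
    (M : Matrix (Fin l) (Fin l) (RatFunc ℚ))
    (hlow : ∀ i j : Fin l, (j : ℕ) < r - 1 → (j : ℕ) < (i : ℕ) → M i j = 0)
    (hdiag : ∀ i : Fin l, (i : ℕ) < r - 1 → M i i = (1 - tq)⁻¹)
    (hblock : ∀ i j : Fin l, r - 1 ≤ (i : ℕ) → r - 1 ≤ (j : ℕ) →
      M i j = if (i : ℕ) ≤ (j : ℕ) then 1
        else if (i : ℕ) = (j : ℕ) + 1 then (1 - tq)⁻¹ else 0) :
    M.det = ((1 - tq)⁻¹) ^ (r - 1) * (-tq / (1 - tq)) ^ (l - r) := by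
  classical
  have hl : 1 ≤ l := hr.trans hrl
  have hne : (1 : RatFunc ℚ) - tq ≠ 0 := by
    have hx : tq ≠ 1 := by
      rw [tq]
      intro h
      have h2 := congrArg RatFunc.num h
      rw [RatFunc.num_X, RatFunc.num_one] at h2
      exact Polynomial.X_ne_C (1 : ℚ) (by simpa using h2)
    intro h
    exact hx (by linear_combination -h)
  set c : RatFunc ℚ := (1 - tq)⁻¹ with hc
  -- the column-operation matrix
  set E : Matrix (Fin l) (Fin l) (RatFunc ℚ) := fun i j =>
    (if (i : ℕ) = (j : ℕ) then 1 else 0) +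
      (if (i : ℕ) + 1 = (j : ℕ) ∧ r - 1 ≤ (i : ℕ) then -1 else 0) with hE
  have hEut : E.BlockTriangular id := by
    intro i j hij
    have hij' : (j : ℕ) < (i : ℕ) := hij
    show (if (i : ℕ) = (j : ℕ) then (1 : RatFunc ℚ) else 0) +
      (if (i : ℕ) + 1 = (j : ℕ) ∧ r - 1 ≤ (i : ℕ) then -1 else 0) = 0
    rw [if_neg (by omega), if_neg (by omega)]
    ring
  have hEdet : E.det = 1 := by
    rw [Matrix.det_of_upperTriangular hEut]
    apply Finset.prod_eq_one
    intro i _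
    show (if (i : ℕ) = (i : ℕ) then (1 : RatFunc ℚ) else 0) +
      (if (i : ℕ) + 1 = (i : ℕ) ∧ r - 1 ≤ (i : ℕ) then -1 else 0) = 1
    rw [if_pos rfl, if_neg (by omega)]
    ring
  set N : Matrix (Fin l) (Fin l) (RatFunc ℚ) := M * E with hN
  have hMN : M.det = N.det := by rw [hN, Matrix.det_mul, hEdet, mul_one]
  -- entries of N
  have hNlt : ∀ i j : Fin l, (j : ℕ) < r → N i j = M i j := by
    intro i j hj
    show ∑ k, M i k * E k j = M i j
    have h1 : ∀ k : Fin l, E k j = if k = j then 1 else 0 := by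
      intro k
      show (if (k : ℕ) = (j : ℕ) then (1 : RatFunc ℚ) else 0) +
        (if (k : ℕ) + 1 = (j : ℕ) ∧ r - 1 ≤ (k : ℕ) then -1 else 0) = _
      rw [if_neg (show ¬((k : ℕ) + 1 = (j : ℕ) ∧ r - 1 ≤ (k : ℕ)) by omega), add_zero]
      simp only [Fin.val_eq_val]
    simp [h1]
  have hNge : ∀ i j : Fin l, r ≤ (j : ℕ) →
      N i j = M i j - M i ⟨(j : ℕ) - 1, by omega⟩ := by
    intro i j hj
    have hj1 : (j : ℕ) - 1 < l := by omega
    show ∑ k, M i k * E k j = _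
    have h1 : ∀ k : Fin l, M i k * E k j =
        (if k = j then M i k else 0) +
          (if k = (⟨(j : ℕ) - 1, hj1⟩ : Fin l) then -M i k else 0) := by
      intro k
      show M i k * ((if (k : ℕ) = (j : ℕ) then (1 : RatFunc ℚ) else 0) +
        (if (k : ℕ) + 1 = (j : ℕ) ∧ r - 1 ≤ (k : ℕ) then -1 else 0)) = _
      have h2 : ((k : ℕ) + 1 = (j : ℕ) ∧ r - 1 ≤ (k : ℕ)) ↔
          k = (⟨(j : ℕ) - 1, hj1⟩ : Fin l) := by
        rw [Fin.ext_iff]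
        show _ ↔ (k : ℕ) = (j : ℕ) - 1
        omega
      simp only [Fin.val_eq_val, h2]
      split_ifs <;> ring
    rw [Finset.sum_congr rfl (fun k _ => h1 k), Finset.sum_add_distrib]
    simp
    ring
  -- block structure
  set b : Fin l → Bool := fun i => decide (r - 1 ≤ (i : ℕ)) with hb
  have hbt : ∀ i : Fin l, b i = true ↔ r - 1 ≤ (i : ℕ) := by
    intro i; simp [hb]
  have hbf : ∀ i : Fin l, b i = false ↔ (i : ℕ) < r - 1 := by
    intro i; simp [hb]; omega
  have hNbt : N.BlockTriangular b := by
    intro i j hij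
    rw [Bool.lt_iff] at hij
    have hjf : (j : ℕ) < r - 1 := (hbf j).mp hij.1
    have hit : r - 1 ≤ (i : ℕ) := (hbt i).mp hij.2
    rw [hNlt i j (by omega)]
    exact hlow i j hjf (by omega)
  rw [hMN, hNbt.det_fintype, Fintype.prod_bool]
  -- the upper-left (false) block
  have hcardF : Fintype.card { a : Fin l // b a = false } = r - 1 := by
    rw [Fintype.card_congr (Equiv.mk
      (fun i : { a : Fin l // b a = false } =>
        (⟨((i : Fin l) : ℕ), (hbf _).mp i.2⟩ : Fin (r - 1)))
      (fun k => ⟨⟨(k : ℕ), by omega⟩, (hbf _).mpr k.2⟩)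
      (fun i => Subtype.ext (Fin.ext rfl)) (fun k => Fin.ext rfl))]
    exact Fintype.card_fin _
  have hfalse : (N.toSquareBlock b false).det = c ^ (r - 1) := by
    have hut : (N.toSquareBlock b false).BlockTriangular id := by
      rintro ⟨i, hi⟩ ⟨j, hj⟩ hij
      have hij' : (j : ℕ) < (i : ℕ) := hij
      have hjf : (j : ℕ) < r - 1 := (hbf j).mp hj
      show N i j = 0
      rw [hNlt i j (by omega)]
      exact hlow i j hjf hij'
    have hdg : ∀ i : { a : Fin l // b a = false },
        (N.toSquareBlock b false) i i = c := by
      rintro ⟨i, hi⟩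
      have hif : (i : ℕ) < r - 1 := (hbf i).mp hi
      show N i i = c
      rw [hNlt i i (by omega)]
      exact hdiag i hif
    rw [Matrix.det_of_upperTriangular hut,
      Finset.prod_congr rfl (fun i _ => hdg i), Finset.prod_const,
      Finset.card_univ, hcardF]
  -- the lower-right (true) block
  have hcardT : Fintype.card { a : Fin l // b a = true } = l - r + 1 := by
    rw [Fintype.card_congr (Equiv.mk
      (fun i : { a : Fin l // b a = true } =>
        (⟨((i : Fin l) : ℕ) - (r - 1), by
          have := (hbt _).mp i.2; have := ((i : Fin l)).isLt; omega⟩ : Fin (l - r + 1)))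
      (fun k => ⟨⟨(k : ℕ) + (r - 1), by have := k.2; omega⟩,
        (hbt _).mpr (by simp)⟩)
      (fun i => Subtype.ext (Fin.ext (by
        have := (hbt _).mp i.2
        show ((i : Fin l) : ℕ) - (r - 1) + (r - 1) = _
        omega)))
      (fun k => Fin.ext (by
        show (k : ℕ) + (r - 1) - (r - 1) = _
        omega)))]
    exact Fintype.card_fin _
  have htrue : (N.toSquareBlock b true).det = (1 - c) ^ (l - r) := by
    have hlt : (N.toSquareBlock b true).BlockTriangular OrderDual.toDual := by
      rintro ⟨i, hi⟩ ⟨j, hj⟩ hij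
      have hij' : (i : ℕ) < (j : ℕ) := hij
      have hit : r - 1 ≤ (i : ℕ) := (hbt i).mp hi
      have hjt : r ≤ (j : ℕ) := by omega
      show N i j = 0
      rw [hNge i j hjt, hblock i j hit (by omega),
        hblock i ⟨(j : ℕ) - 1, by omega⟩ hit (show r - 1 ≤ (j : ℕ) - 1 by omega)]
      rw [if_pos (by omega), if_pos (show (i : ℕ) ≤ (j : ℕ) - 1 by omega)]
      ring
    have hdiagN : ∀ i : { a : Fin l // b a = true },
        (N.toSquareBlock b true) i i =
          if ((i : Fin l) : ℕ) = r - 1 then 1 else 1 - c := by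
      rintro ⟨i, hi⟩
      have hit : r - 1 ≤ (i : ℕ) := (hbt i).mp hi
      show N i i = _
      by_cases h : (i : ℕ) = r - 1
      · rw [if_pos h, hNlt i i (by omega), hblock i i hit hit, if_pos le_rfl]
      · have hir : r ≤ (i : ℕ) := by omega
        rw [if_neg h, hNge i i hir, hblock i i hit hit,
          hblock i ⟨(i : ℕ) - 1, by omega⟩ hit (show r - 1 ≤ (i : ℕ) - 1 by omega),
          if_pos le_rfl, if_neg (show ¬(i : ℕ) ≤ (i : ℕ) - 1 by omega),
          if_pos (show (i : ℕ) = (i : ℕ) - 1 + 1 by omega)]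
    set i0 : { a : Fin l // b a = true } :=
      ⟨⟨r - 1, by omega⟩, (hbt _).mpr (by simp)⟩ with hi0
    have h2 : ∀ x ∈ Finset.univ.erase i0,
        (N.toSquareBlock b true) x x = 1 - c := by
      intro x hx
      rw [hdiagN x, if_neg]
      intro h
      exact (Finset.ne_of_mem_erase hx) (Subtype.ext (Fin.ext (by
        rw [h])))
    rw [Matrix.det_of_lowerTriangular _ hlt,
      ← Finset.mul_prod_erase Finset.univ _ (Finset.mem_univ i0),
      hdiagN i0, if_pos rfl, one_mul,
      Finset.prod_congr rfl h2, Finset.prod_const,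
      Finset.card_erase_of_mem (Finset.mem_univ i0), Finset.card_univ, hcardT]
    norm_num
  rw [hfalse, htrue]
  have h1c : 1 - c = -tq / (1 - tq) := by
    rw [hc]; field_simp; ring
  rw [h1c, mul_comm]

end
end

section
/- Let N be the m×m matrix over ℚ(t) with N_{ii} = 1, N_{i+1,i} = 1/(1-t), N_{ij} = 1 for j > i, and N_{ij} = 0 for j < i - 1. Then det N = (-t/(1-t))^{m-1}. -/
/-!
Expanding along the first column, only the entries `1` (row 0) and `a` (row 1) are nonzero, and
deleting either of these rows together with the first column leaves the same matrix of size one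
less. Hence the determinant with subdiagonal entry `a` is `(1 - a) ^ (m - 1)`, and
`1 - 1 / (1 - t) = -t / (1 - t)`.
-/

open Finset

noncomputable section

namespace Matrix

def quasiUpperTriangular {R : Type*} [Zero R] [One R] (n : ℕ) (a : R) :
    Matrix (Fin n) (Fin n) R :=
  of fun i j => if (i : ℕ) ≤ j then 1 else if (i : ℕ) = j + 1 then a else 0

section

variable {R : Type*} [Zero R] [One R] (n : ℕ) (a : R)

theorem quasiUpperTriangular_submatrix_succAbove_zero :
    (quasiUpperTriangular (n + 2) a).submatrix (Fin.succAbove 0) Fin.succ =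
      quasiUpperTriangular (n + 1) a := by
  ext i j
  simp [quasiUpperTriangular]

theorem quasiUpperTriangular_submatrix_succAbove_one :
    (quasiUpperTriangular (n + 2) a).submatrix (Fin.succAbove 1) Fin.succ =
      quasiUpperTriangular (n + 1) a := by
  ext i j
  cases i using Fin.cases <;> simp [quasiUpperTriangular]

end

theorem det_quasiUpperTriangular_succ {R : Type*} [CommRing R] (n : ℕ) (a : R) :
    (quasiUpperTriangular (n + 1) a).det = (1 - a) ^ n := by
  induction n with
  | zero => simp [quasiUpperTriangular]
  | succ n ih =>
    rw [det_succ_column_zero, Fin.sum_univ_succ, Fin.sum_univ_succ,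
      sum_eq_zero fun i _ => by simp [quasiUpperTriangular],
      quasiUpperTriangular_submatrix_succAbove_zero, Fin.succ_zero_eq_one,
      quasiUpperTriangular_submatrix_succAbove_one, ih]
    simp [quasiUpperTriangular]
    ring

end Matrix

theorem RatFunc.one_sub_X_ne_zero (K : Type*) [Field K] : (1 - X : RatFunc K) ≠ 0 := by
  intro h
  simpa using congrArg intDegree (sub_eq_zero.mp h)

theorem det_quasi_upper_triangular_general (m : ℕ)
    (N : Matrix (Fin m) (Fin m) (RatFunc ℚ))
    (hN : ∀ i j : Fin m,
      N i j = if (i : ℕ) ≤ (j : ℕ) then 1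
        else if (i : ℕ) = (j : ℕ) + 1 then (1 - tq)⁻¹ else 0) :
    N.det = (-tq / (1 - tq)) ^ (m - 1) := by
  obtain rfl : N = Matrix.quasiUpperTriangular m (1 - tq)⁻¹ := Matrix.ext hN
  cases m with
  | zero => simp
  | succ n =>
    have ht : (1 : RatFunc ℚ) - tq ≠ 0 := RatFunc.one_sub_X_ne_zero ℚ
    rw [Matrix.det_quasiUpperTriangular_succ, Nat.add_sub_cancel]
    congr 1
    field_simp
    ring

/-- the `m×m` quasi upper-triangular matrix `N` over `ℚ(t)` with
`N_{ii} = 1`, `N_{i+1,i} = 1/(1-t)`, `N_{ij} = 1` for `j > i`, and `N_{ij} = 0`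
for `j < i-1`, has determinant `(-t/(1-t))^{m-1}`. -/
theorem det_quasi_upper_triangular (m : ℕ) (hm : 1 ≤ m)
    (N : Matrix (Fin m) (Fin m) (RatFunc ℚ))
    (hN : ∀ i j : Fin m,
      N i j = if (i : ℕ) ≤ (j : ℕ) then 1
        else if (i : ℕ) = (j : ℕ) + 1 then (1 - tq)⁻¹ else 0) :
    N.det = (-tq / (1 - tq)) ^ (m - 1) :=
  det_quasi_upper_triangular_general m N hN

end
end

section
/- Let λ be a partition of length l, τ a composition of k (no componentwise containment τ ⊆ λ assumed), and let μ be the partition obtained by straightening λ - τ, i.e., μ = σ(λ - τ + δ) - δ is a partition for some σ ∈ S_l, with δ = (l-1,...,1,0). Then μ_i ≤ λ_i for all i. -/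
open Finset

/-- let `λ = (λ_1 ≥ ⋯ ≥ λ_l ≥ 0)` be a partition,
`δ = (l-1, …, 1, 0)`, and `τ` a tuple of nonnegative integers. Suppose the
entries of `λ - τ + δ` are distinct nonnegative integers and
`μ = σ(λ - τ + δ) - δ` (i.e. `μ_i = λ_{σ(i)} - τ_{σ(i)} + i - σ(i)`) is a
partition for a permutation `σ ∈ S_l`. Then `μ_i ≤ λ_i` for all `i`. -/
theorem straightened_partition_le (l : ℕ) (lam tau : Fin l → ℕ)
    (hlam : Antitone lam)
    (hdistinct : Function.Injective
      (fun i : Fin l => (lam i : ℤ) - (tau i : ℤ) + ((l : ℤ) - 1 - (i : ℕ))))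
    (hnonneg : ∀ i : Fin l, 0 ≤ (lam i : ℤ) - (tau i : ℤ) + ((l : ℤ) - 1 - (i : ℕ)))
    (σ : Equiv.Perm (Fin l)) (mu : Fin l → ℤ)
    (hmu : ∀ i : Fin l,
      mu i = (lam (σ i) : ℤ) - (tau (σ i) : ℤ) + (i : ℕ) - ((σ i : ℕ) : ℤ))
    (hmu_anti : Antitone mu) (hmu_nonneg : ∀ i, 0 ≤ mu i) :
    ∀ i : Fin l, mu i ≤ (lam i : ℤ) := by
  intro i
  obtain ⟨k, hki, hik⟩ : ∃ k : Fin l, k ≤ i ∧ i ≤ σ k := by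
    by_contra h
    push_neg at h
    have hsub : (Finset.Iic i).image σ ⊆ Finset.Iio i := by
      intro j hj
      simp only [Finset.mem_image] at hj
      obtain ⟨k, hk, rfl⟩ := hj
      exact Finset.mem_Iio.mpr (h k (Finset.mem_Iic.mp hk))
    have hcard := Finset.card_le_card hsub
    rw [Finset.card_image_of_injective _ σ.injective, Fin.card_Iic, Fin.card_Iio] at hcard
    omega
  have h1 : mu i ≤ mu k := hmu_anti hki
  have h2 : (k : ℤ) ≤ (i : ℤ) := by exact_mod_cast hki
  have h3 : mu k = (lam (σ k) : ℤ) - (tau (σ k) : ℤ) + (k : ℕ) - ((σ k : ℕ) : ℤ) := hmu k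
  have h4 : (lam (σ k) : ℤ) ≤ (lam i : ℤ) := by exact_mod_cast hlam hik
  have h5 : (i : ℤ) ≤ ((σ k : ℕ) : ℤ) := by exact_mod_cast hik
  have h6 : (0 : ℤ) ≤ (tau (σ k) : ℤ) := Int.ofNat_nonneg _
  linarith
end
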